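/- arXiv:2110.01230 — 3 statements merged into one kernel-verified Lean document; each statement's English description precedes it below -/
import Mathlib

section
/- Let L ≥ 1, N = 2^L, and let S^1, …, S^L be the butterfly supports of size N. Let X_L, …, X_1 be complex N×N matrices with supp(X_ℓ) ⊆ S^ℓ for all ℓ. Then for all 1 ≤ p ≤ q ≤ L, supp(X_q X_{q−1} ⋯ X_p) ⊆ W^[q;p], where W^[q;p] := I_{2^{L−q}} ⊗ U_{2^{q−p+1}} ⊗ I_{2^{p−1}}. Moreover, if supp(X_ℓ) = S^ℓ exactly for all ℓ, then supp(X_q ⋯ X_p) = W^[q;p] for all 1 ≤ p ≤ q ≤ L. -/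
/-- The support of a matrix: the set of index pairs of its nonzero entries. -/
def msupp {N : ℕ} (M : Matrix (Fin N) (Fin N) ℂ) : Set (Fin N × Fin N) :=
  {p | M p.1 p.2 ≠ 0}

/-- The support of the binary matrix `W^[q;p] := I_{2^{L−q}} ⊗ U_{2^{q−p+1}} ⊗ I_{2^{p−1}}`
of size `2^L × 2^L` (with `U_n` the all-ones matrix): writing an index `i` in base `2` as
`i = a·2^q + c·2^{p−1} + d` with `a < 2^{L−q}`, `c < 2^{q−p+1}`, `d < 2^{p−1}`,
the entry `(i, j)` is nonzero iff `i / 2^q = j / 2^q` (same identity block of `I_{2^{L−q}}`)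
and `i % 2^{p−1} = j % 2^{p−1}` (same entry of `I_{2^{p−1}}`). -/
def wSupp (L q p : ℕ) : Set (Fin (2 ^ L) × Fin (2 ^ L)) :=
  {x | (x.1 : ℕ) / 2 ^ q = (x.2 : ℕ) / 2 ^ q ∧
       (x.1 : ℕ) % 2 ^ (p - 1) = (x.2 : ℕ) % 2 ^ (p - 1)}

/-- The `ℓ`-th butterfly support `S^ℓ := I_{2^{L−ℓ}} ⊗ U_2 ⊗ I_{2^{ℓ−1}}`, i.e. `W^[ℓ;ℓ]`. -/
def butterflySupp (L ℓ : ℕ) : Set (Fin (2 ^ L) × Fin (2 ^ L)) := wSupp L ℓ ℓ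

/-- The partial product `X_q · X_{q−1} · ⋯ · X_p`. -/
noncomputable def pprod {N : ℕ} (X : ℕ → Matrix (Fin N) (Fin N) ℂ) (q p : ℕ) :
    Matrix (Fin N) (Fin N) ℂ :=
  (((List.range' p (q + 1 - p)).reverse).map X).prod

lemma pprod_self {N : ℕ} (X : ℕ → Matrix (Fin N) (Fin N) ℂ) (p : ℕ) :
    pprod X p p = X p := by
  have : p + 1 - p = 1 := by omega
  simp [pprod, this, List.range']

lemma pprod_succ {N : ℕ} (X : ℕ → Matrix (Fin N) (Fin N) ℂ) {p q : ℕ} (h : p ≤ q) :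
    pprod X (q + 1) p = X (q + 1) * pprod X q p := by
  unfold pprod
  have h1 : q + 1 + 1 - p = (q + 1 - p) + 1 := by omega
  have h2 : p + 1 * (q + 1 - p) = q + 1 := by omega
  rw [h1, List.range'_concat, h2, List.reverse_append, List.reverse_singleton,
    List.singleton_append, List.map_cons, List.prod_cons]

lemma div_succ_eq {q a b : ℕ} (h : a / 2 ^ q = b / 2 ^ q) :
    a / 2 ^ (q + 1) = b / 2 ^ (q + 1) := by
  rw [pow_succ, ← Nat.div_div_eq_div_mul, ← Nat.div_div_eq_div_mul, h]

lemma mod_sub_eq {r s a b : ℕ} (hrs : r ≤ s) (h : a % 2 ^ s = b % 2 ^ s) :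
    a % 2 ^ r = b % 2 ^ r := by
  have hd : (2:ℕ) ^ r ∣ 2 ^ s := pow_dvd_pow 2 hrs
  rw [← Nat.mod_mod_of_dvd a hd, ← Nat.mod_mod_of_dvd b hd, h]

lemma step_subset {L q p : ℕ} (hp : 1 ≤ p) (hpq : p ≤ q)
    (A B : Matrix (Fin (2 ^ L)) (Fin (2 ^ L)) ℂ)
    (hB : msupp B ⊆ wSupp L (q + 1) (q + 1)) (hA : msupp A ⊆ wSupp L q p) :
    msupp (B * A) ⊆ wSupp L (q + 1) p := by
  rintro ⟨i, j⟩ h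
  have h' : ∃ k, B i k * A k j ≠ 0 := by
    have := h
    simp only [msupp, Set.mem_setOf_eq, Matrix.mul_apply] at this
    obtain ⟨k, _, hk⟩ := Finset.exists_ne_zero_of_sum_ne_zero this
    exact ⟨k, hk⟩
  obtain ⟨k, hk⟩ := h'
  have hB' := hB (show (i, k) ∈ msupp B from fun h0 => hk (by simp [h0]))
  have hA' := hA (show (k, j) ∈ msupp A from fun h0 => hk (by simp [h0]))
  obtain ⟨hB1, hB2⟩ := hB'
  obtain ⟨hA1, hA2⟩ := hA'
  simp only [Nat.add_sub_cancel] at hB2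
  constructor
  · exact hB1.trans (div_succ_eq hA1)
  · exact (mod_sub_eq (by omega) hB2).trans hA2

lemma step_supset {L q p : ℕ} (hp : 1 ≤ p) (hpq : p ≤ q) (hqL : q + 1 ≤ L)
    (A B : Matrix (Fin (2 ^ L)) (Fin (2 ^ L)) ℂ)
    (hB : msupp B = wSupp L (q + 1) (q + 1)) (hA : msupp A = wSupp L q p) :
    wSupp L (q + 1) p ⊆ msupp (B * A) := by
  rintro ⟨i, j⟩ ⟨hij1, hij2⟩
  -- hij1 : i / 2^(q+1) = j / 2^(q+1), hij2 : i % 2^(p-1) = j % 2^(p-1)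
  set kv : ℕ := (j : ℕ) % 2 ^ q + ((j : ℕ) / 2 ^ q) * 2 ^ q with hkv0
  set kn : ℕ := (i : ℕ) % 2 ^ q + ((j : ℕ) / 2 ^ q) * 2 ^ q with hkn
  have hq2 : (0:ℕ) < 2 ^ q := Nat.pow_pos (n := q) (by norm_num)
  have hkdiv : kn / 2 ^ q = (j : ℕ) / 2 ^ q := by
    rw [hkn, Nat.add_mul_div_right _ _ hq2, Nat.mod_div_self, Nat.zero_add]
  have hkmod : kn % 2 ^ q = (i : ℕ) % 2 ^ q := by
    rw [hkn, Nat.add_mul_mod_self_right, Nat.mod_mod_of_dvd _ dvd_rfl]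
  have hklt : kn < 2 ^ L := by
    have h1 : (j : ℕ) / 2 ^ q < 2 ^ (L - q) := by
      rw [Nat.div_lt_iff_lt_mul hq2, ← pow_add]
      have : L - q + q = L := by omega
      rw [this]; exact j.isLt
    calc kn < 2 ^ q + ((j : ℕ) / 2 ^ q) * 2 ^ q := by
          exact Nat.add_lt_add_right (Nat.mod_lt _ hq2) _
      _ = ((j : ℕ) / 2 ^ q + 1) * 2 ^ q := by ring
      _ ≤ 2 ^ (L - q) * 2 ^ q := Nat.mul_le_mul_right _ (by omega)
      _ = 2 ^ L := by rw [← pow_add]; congr 1; omega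
  set k : Fin (2 ^ L) := ⟨kn, hklt⟩ with hk
  have hBik : B i k ≠ 0 := by
    have : (i, k) ∈ wSupp L (q + 1) (q + 1) := by
      constructor
      · show (i : ℕ) / 2 ^ (q + 1) = kn / 2 ^ (q + 1)
        rw [hij1]
        exact (div_succ_eq hkdiv).symm
      · show (i : ℕ) % 2 ^ (q + 1 - 1) = kn % 2 ^ (q + 1 - 1)
        simp only [Nat.add_sub_cancel]
        exact hkmod.symm
    rw [← hB] at this
    exact this
  have hAkj : A k j ≠ 0 := by
    have : (k, j) ∈ wSupp L q p := by
      constructor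
      · exact hkdiv
      · show kn % 2 ^ (p - 1) = (j : ℕ) % 2 ^ (p - 1)
        have := mod_sub_eq (show p - 1 ≤ q by omega) hkmod
        rw [this]; exact hij2
    rw [← hA] at this
    exact this
  show (B * A) i j ≠ 0
  rw [Matrix.mul_apply]
  have huniq : ∀ k' : Fin (2 ^ L), k' ∈ Finset.univ → k' ≠ k → B i k' * A k' j = 0 := by
    intro k' _ hne
    by_contra hc
    have hB' : B i k' ≠ 0 := fun h0 => hc (by simp [h0])
    have hA' : A k' j ≠ 0 := fun h0 => hc (by simp [h0])
    rw [show (B i k' ≠ 0) = ((i, k') ∈ msupp B) from rfl, hB] at hB'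
    rw [show (A k' j ≠ 0) = ((k', j) ∈ msupp A) from rfl, hA] at hA'
    obtain ⟨h1, h2⟩ := hB'
    obtain ⟨h3, h4⟩ := hA'
    simp only [Nat.add_sub_cancel] at h2
    apply hne
    apply Fin.ext
    have : (k' : ℕ) = 2 ^ q * ((k' : ℕ) / 2 ^ q) + (k' : ℕ) % 2 ^ q :=
      (Nat.div_add_mod _ _).symm
    show (k' : ℕ) = kn
    calc (k' : ℕ) = 2 ^ q * ((k' : ℕ) / 2 ^ q) + (k' : ℕ) % 2 ^ q :=
          (Nat.div_add_mod _ _).symm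
      _ = kn := by rw [h3, ← h2, hkn]; ring
  rw [Finset.sum_eq_single_of_mem k (Finset.mem_univ k) huniq]
  exact mul_ne_zero hBik hAkj

/-- Let `N = 2^L`, `L ≥ 1`, and `X_L, …, X_1` complex `N × N` matrices
with `supp X_ℓ ⊆ S^ℓ` (the `ℓ`-th butterfly support).  Then for all `1 ≤ p ≤ q ≤ L`,
`supp (X_q ⋯ X_p) ⊆ W^[q;p]`; moreover if `supp X_ℓ = S^ℓ` exactly for all `ℓ`, then
`supp (X_q ⋯ X_p) = W^[q;p]` for all `1 ≤ p ≤ q ≤ L`. -/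
theorem butterfly_partial_product_support (L : ℕ) (hL : 1 ≤ L)
    (X : ℕ → Matrix (Fin (2 ^ L)) (Fin (2 ^ L)) ℂ)
    (hsupp : ∀ ℓ, 1 ≤ ℓ → ℓ ≤ L → msupp (X ℓ) ⊆ butterflySupp L ℓ) :
    (∀ p q, 1 ≤ p → p ≤ q → q ≤ L → msupp (pprod X q p) ⊆ wSupp L q p) ∧
    ((∀ ℓ, 1 ≤ ℓ → ℓ ≤ L → msupp (X ℓ) = butterflySupp L ℓ) →
      ∀ p q, 1 ≤ p → p ≤ q → q ≤ L → msupp (pprod X q p) = wSupp L q p) := by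
  have main : ∀ p q, 1 ≤ p → p ≤ q → q ≤ L → msupp (pprod X q p) ⊆ wSupp L q p := by
    intro p q hp hpq
    induction q, hpq using Nat.le_induction with
    | base => intro hq; rw [pprod_self]; exact hsupp p hp hq
    | succ q hpq ih =>
      intro hq
      rw [pprod_succ X hpq]
      exact step_subset hp hpq _ _ (hsupp (q + 1) (by omega) hq) (ih (by omega))
  refine ⟨main, fun hexact => ?_⟩
  intro p q hp hpq
  induction q, hpq using Nat.le_induction with
  | base => intro hq; rw [pprod_self]; exact hexact p hp hq
  | succ q hpq ih =>
    intro hq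
    rw [pprod_succ X hpq]
    have hBe : msupp (X (q + 1)) = wSupp L (q + 1) (q + 1) :=
      hexact (q + 1) (by omega) hq
    have hAe : msupp (pprod X q p) = wSupp L q p := ih (by omega)
    exact Set.Subset.antisymm
      (step_subset hp hpq _ _ hBe.subset hAe.subset)
      (step_supset hp hpq hq _ _ hBe hAe)
end

section
/- Let L ≥ 1, N = 2^L, and 1 ≤ p ≤ ℓ < q ≤ L. Then the N rank-one supports of φ(W^[q;ℓ+1], W^[ℓ;p]) are pairwise disjoint. Consequently, uniquescaling(Σ_{(W^[q;ℓ+1], W^[ℓ;p])}) = IC((W^[q;ℓ+1], W^[ℓ;p])) ∩ MC((W^[q;ℓ+1], W^[ℓ;p])). -/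
open Matrix

/-- The column support of a matrix: the set of indices of nonzero columns. -/
def colsupp {N : ℕ} (M : Matrix (Fin N) (Fin N) ℂ) : Set (Fin N) :=
  {i | ∃ k, M k i ≠ 0}

/-- The column support of a binary support (viewed as a set of index pairs). -/
def colsuppS {N : ℕ} (S : Set (Fin N × Fin N)) : Set (Fin N) :=
  {i | ∃ k, (k, i) ∈ S}

lemma wSupp_refl (L q p : ℕ) (i : Fin (2 ^ L)) : (i, i) ∈ wSupp L q p := ⟨rfl, rfl⟩

lemma colsuppS_wSupp (L q p : ℕ) : colsuppS (wSupp L q p) = Set.univ :=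
  Set.eq_univ_of_forall fun i => ⟨i, wSupp_refl L q p i⟩

lemma col_unique {L p ℓ q : ℕ} (i j k₁ k₂ : Fin (2 ^ L))
    (h1 : (k₁, i) ∈ wSupp L q (ℓ + 1)) (h1' : (k₁, j) ∈ wSupp L q (ℓ + 1))
    (h2 : (k₂, i) ∈ wSupp L ℓ p) (h2' : (k₂, j) ∈ wSupp L ℓ p) : i = j := by
  obtain ⟨-, hm1⟩ := h1
  obtain ⟨-, hm1'⟩ := h1'
  obtain ⟨hd2, -⟩ := h2
  obtain ⟨hd2', -⟩ := h2'
  simp only [Nat.add_sub_cancel] at hm1 hm1'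
  have hmod : (i : ℕ) % 2 ^ ℓ = (j : ℕ) % 2 ^ ℓ := hm1.symm.trans hm1'
  have hdiv : (i : ℕ) / 2 ^ ℓ = (j : ℕ) / 2 ^ ℓ := hd2.symm.trans hd2'
  have : (i : ℕ) = (j : ℕ) := by
    calc (i : ℕ) = 2 ^ ℓ * ((i : ℕ) / 2 ^ ℓ) + (i : ℕ) % 2 ^ ℓ := (Nat.div_add_mod _ _).symm
      _ = 2 ^ ℓ * ((j : ℕ) / 2 ^ ℓ) + (j : ℕ) % 2 ^ ℓ := by rw [hdiv, hmod]
      _ = (j : ℕ) := Nat.div_add_mod _ _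
  exact Fin.ext this

lemma prod_entry {L p ℓ q : ℕ} (X Y : Matrix (Fin (2 ^ L)) (Fin (2 ^ L)) ℂ)
    (hX : msupp X ⊆ wSupp L q (ℓ + 1)) (hY : msupp Y ⊆ wSupp L ℓ p)
    (k₁ k₂ c : Fin (2 ^ L)) (h1 : (k₁, c) ∈ wSupp L q (ℓ + 1))
    (h2 : (k₂, c) ∈ wSupp L ℓ p) :
    (X * Yᵀ) k₁ k₂ = X k₁ c * Y k₂ c := by
  rw [Matrix.mul_apply]
  simp only [Matrix.transpose_apply]
  apply Finset.sum_eq_single_of_mem c (Finset.mem_univ c)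
  intro b _ hbc
  by_contra hne
  have hx : X k₁ b ≠ 0 := left_ne_zero_of_mul hne
  have hy : Y k₂ b ≠ 0 := right_ne_zero_of_mul hne
  exact hbc (col_unique b c k₁ k₂ (hX hx) h1 (hY hy) h2)

/-- Let `L ≥ 1`, `N = 2^L`, `1 ≤ p ≤ ℓ < q ≤ L`.  The `N` rank-one
supports of `φ(W^[q;ℓ+1], W^[ℓ;p])` are pairwise disjoint; consequently
`uniquescaling(Σ) = IC ∩ MC` for the pair of supports `(W^[q;ℓ+1], W^[ℓ;p])`. -/
theorem wSupp_rank_one_disjoint_and_uniquescaling (L p ℓ q : ℕ)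
    (hp : 1 ≤ p) (hpl : p ≤ ℓ) (hlq : ℓ < q) (hqL : q ≤ L) :
    (∀ i j : Fin (2 ^ L), i ≠ j →
      Disjoint
        (({k | (k, i) ∈ wSupp L q (ℓ + 1)} : Set (Fin (2 ^ L))) ×ˢ
          ({k | (k, i) ∈ wSupp L ℓ p} : Set (Fin (2 ^ L))))
        (({k | (k, j) ∈ wSupp L q (ℓ + 1)} : Set (Fin (2 ^ L))) ×ˢ
          ({k | (k, j) ∈ wSupp L ℓ p} : Set (Fin (2 ^ L))))) ∧
    ∀ X Y : Matrix (Fin (2 ^ L)) (Fin (2 ^ L)) ℂ,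
      msupp X ⊆ wSupp L q (ℓ + 1) → msupp Y ⊆ wSupp L ℓ p →
      ((∀ X' Y' : Matrix (Fin (2 ^ L)) (Fin (2 ^ L)) ℂ,
          msupp X' ⊆ wSupp L q (ℓ + 1) → msupp Y' ⊆ wSupp L ℓ p →
          X' * Y'ᵀ = X * Yᵀ →
          ∃ d : Fin (2 ^ L) → ℂ, (∀ i, d i ≠ 0) ∧
            X' = X * Matrix.diagonal d ∧ Y' = Y * Matrix.diagonal fun i => (d i)⁻¹) ↔
        (colsupp X = colsupp Y ∧ colsupp X = colsuppS (wSupp L q (ℓ + 1)) ∧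
          colsupp Y = colsuppS (wSupp L ℓ p))) := by
  constructor
  · -- disjointness
    intro i j hij
    rw [Set.disjoint_left]
    rintro ⟨k₁, k₂⟩ ⟨h1, h2⟩ ⟨h1', h2'⟩
    exact hij (col_unique i j k₁ k₂ h1 h1' h2 h2')
  intro X Y hX hY
  constructor
  · -- forward: unique scaling ⇒ column supports
    intro h
    -- colsupp X = univ
    have hXfull : ∀ i : Fin (2 ^ L), ∃ k, X k i ≠ 0 := by
      intro i
      by_contra hno
      push_neg at hno
      by_cases hYi : ∃ k, Y k i ≠ 0
      · obtain ⟨k, hk⟩ := hYi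
        set Y' : Matrix (Fin (2 ^ L)) (Fin (2 ^ L)) ℂ :=
          fun a c => if c = i then 0 else Y a c with hY'def
        have hY'supp : msupp Y' ⊆ wSupp L ℓ p := by
          rintro ⟨a, c⟩ hac
          simp only [msupp, hY'def, Set.mem_setOf_eq] at hac
          by_cases hci : c = i
          · simp [hci] at hac
          · exact hY (by simpa [hci, msupp] using hac)
        have hprod : X * Y'ᵀ = X * Yᵀ := by
          ext k₁ k₂
          rw [Matrix.mul_apply, Matrix.mul_apply]
          apply Finset.sum_congr rfl
          intro c _
          simp only [Matrix.transpose_apply, hY'def]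
          by_cases hci : c = i
          · simp [hci, hno k₁]
          · exact congrArg (X k₁ c * ·) (if_neg hci)
        obtain ⟨d, hd, -, hYeq⟩ := h X Y' hX hY'supp hprod
        have := congrFun (congrFun hYeq k) i
        simp only [hY'def, Matrix.mul_diagonal, if_pos rfl] at this
        rcases mul_eq_zero.mp this.symm with h' | h'
        · exact hk h'
        · exact absurd h' (inv_ne_zero (hd i))
      · push_neg at hYi
        set X' : Matrix (Fin (2 ^ L)) (Fin (2 ^ L)) ℂ :=
          fun a c => if a = i ∧ c = i then 1 else X a c with hX'def
        have hX'supp : msupp X' ⊆ wSupp L q (ℓ + 1) := by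
          rintro ⟨a, c⟩ hac
          simp only [msupp, hX'def, Set.mem_setOf_eq] at hac
          by_cases hai : a = i ∧ c = i
          · rw [hai.1, hai.2]; exact wSupp_refl _ _ _ i
          · exact hX (by simpa [hai, msupp] using hac)
        have hprod : X' * Yᵀ = X * Yᵀ := by
          ext k₁ k₂
          rw [Matrix.mul_apply, Matrix.mul_apply]
          apply Finset.sum_congr rfl
          intro c _
          simp only [Matrix.transpose_apply, hX'def]
          by_cases hci : c = i
          · simp [hci, hYi k₂]
          · simp [hci]
        obtain ⟨d, hd, hXeq, -⟩ := h X' Y hX'supp hY hprod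
        have hcontr := congrFun (congrFun hXeq i) i
        rw [Matrix.mul_diagonal, hno i, zero_mul] at hcontr
        simp [hX'def] at hcontr
    have hYfull : ∀ i : Fin (2 ^ L), ∃ k, Y k i ≠ 0 := by
      intro i
      by_contra hno
      push_neg at hno
      obtain ⟨k, hk⟩ := hXfull i
      set X' : Matrix (Fin (2 ^ L)) (Fin (2 ^ L)) ℂ :=
        fun a c => if c = i then 0 else X a c with hX'def
      have hX'supp : msupp X' ⊆ wSupp L q (ℓ + 1) := by
        rintro ⟨a, c⟩ hac
        simp only [msupp, hX'def, Set.mem_setOf_eq] at hac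
        by_cases hci : c = i
        · simp [hci] at hac
        · exact hX (by simpa [hci, msupp] using hac)
      have hprod : X' * Yᵀ = X * Yᵀ := by
        ext k₁ k₂
        rw [Matrix.mul_apply, Matrix.mul_apply]
        apply Finset.sum_congr rfl
        intro c _
        simp only [Matrix.transpose_apply, hX'def]
        by_cases hci : c = i
        · simp [hci, hno k₂]
        · simp [hci]
      obtain ⟨d, hd, hXeq, -⟩ := h X' Y hX'supp hY hprod
      have := congrFun (congrFun hXeq k) i
      simp only [hX'def, Matrix.mul_diagonal, if_pos rfl] at this
      exact hk (by
        rcases mul_eq_zero.mp this.symm with h' | h'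
        · exact h'
        · exact absurd h' (hd i))
    have h1 : colsupp X = Set.univ := Set.eq_univ_of_forall fun i => hXfull i
    have h2 : colsupp Y = Set.univ := Set.eq_univ_of_forall fun i => hYfull i
    refine ⟨h1.trans h2.symm, ?_, ?_⟩
    · rw [h1, colsuppS_wSupp]
    · rw [h2, colsuppS_wSupp]
  · -- backward
    rintro ⟨-, hcX, hcY⟩ X' Y' hX' hY' heq
    have hXfull : ∀ c : Fin (2 ^ L), ∃ k, X k c ≠ 0 := by
      intro c
      have : c ∈ colsupp X := by rw [hcX, colsuppS_wSupp]; trivial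
      exact this
    have hYfull : ∀ c : Fin (2 ^ L), ∃ k, Y k c ≠ 0 := by
      intro c
      have : c ∈ colsupp Y := by rw [hcY, colsuppS_wSupp]; trivial
      exact this
    choose kX hkX using hXfull
    choose kY hkY using hYfull
    have hmX : ∀ c, (kX c, c) ∈ wSupp L q (ℓ + 1) := fun c => hX (hkX c)
    have hmY : ∀ c, (kY c, c) ∈ wSupp L ℓ p := fun c => hY (hkY c)
    have hkey : ∀ k₁ k₂ c : Fin (2 ^ L), (k₁, c) ∈ wSupp L q (ℓ + 1) →
        (k₂, c) ∈ wSupp L ℓ p → X' k₁ c * Y' k₂ c = X k₁ c * Y k₂ c := by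
      intro k₁ k₂ c h1 h2
      have e1 := prod_entry X' Y' hX' hY' k₁ k₂ c h1 h2
      have e2 := prod_entry X Y hX hY k₁ k₂ c h1 h2
      rw [← e1, ← e2, heq]
    have hprodne : ∀ c, X' (kX c) c * Y' (kY c) c ≠ 0 := by
      intro c
      rw [hkey (kX c) (kY c) c (hmX c) (hmY c)]
      exact mul_ne_zero (hkX c) (hkY c)
    have hY'ne : ∀ c, Y' (kY c) c ≠ 0 := fun c => right_ne_zero_of_mul (hprodne c)
    have hX'ne : ∀ c, X' (kX c) c ≠ 0 := fun c => left_ne_zero_of_mul (hprodne c)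
    set d : Fin (2 ^ L) → ℂ := fun c => Y (kY c) c / Y' (kY c) c with hddef
    have hd : ∀ c, d c ≠ 0 := fun c => div_ne_zero (hkY c) (hY'ne c)
    have hXd : ∀ k c, X' k c = X k c * d c := by
      intro k c
      by_cases hm : (k, c) ∈ wSupp L q (ℓ + 1)
      · have h1 := hkey k (kY c) c hm (hmY c)
        rw [hddef]
        rw [mul_div_assoc', eq_div_iff (hY'ne c)]
        exact h1
      · have hx' : X' k c = 0 := by
          by_contra hne; exact hm (hX' hne)
        have hx : X k c = 0 := by
          by_contra hne; exact hm (hX hne)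
        rw [hx', hx, zero_mul]
    have hYd : ∀ k c, Y' k c = Y k c * (d c)⁻¹ := by
      intro k c
      by_cases hm : (k, c) ∈ wSupp L ℓ p
      · have h1 := hkey (kX c) k c (hmX c) hm
        rw [hXd (kX c) c] at h1
        rw [eq_mul_inv_iff_mul_eq₀ (hd c)]
        have h2 : X (kX c) c * (Y' k c * d c) = X (kX c) c * Y k c := by
          linear_combination h1
        exact mul_left_cancel₀ (hkX c) h2
      · have hy' : Y' k c = 0 := by
          by_contra hne; exact hm (hY' hne)
        have hy : Y k c = 0 := by
          by_contra hne; exact hm (hY hne)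
        rw [hy', hy, zero_mul]
    refine ⟨d, hd, ?_, ?_⟩
    · ext k c
      rw [Matrix.mul_diagonal]
      exact hXd k c
    · ext k c
      rw [Matrix.mul_diagonal]
      exact hYd k c
end

section
/- Let L ≥ 1 and N = 2^L. Let F^(ℓ) := I_{2^{L−ℓ}} ⊗ B_{2^ℓ} be the butterfly factors and R_N the bit-reversal permutation, so that F_N = F^(L) ⋯ F^(1) R_N for the DFT matrix F_N. Then for every tuple (X'_L, …, X'_1) of complex N×N matrices satisfying supp(X'_ℓ) ⊆ supp(F^(ℓ)) for 2 ≤ ℓ ≤ L, supp(X'_1) ⊆ supp(F^(1) R_N), and X'_L ⋯ X'_1 = F_N, there exist invertible diagonal N×N matrices D_1, …, D_{L−1} such that, with D_0 = D_L = I_N, X'_ℓ = D_ℓ⁻¹ F^(ℓ) D_{ℓ−1} for 2 ≤ ℓ ≤ L and X'_1 = D_1⁻¹ F^(1) R_N. -/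
open Matrix

/-- The DFT matrix of size `N`: entry `ω_N^{(k−1)(l−1)}` with `ω_N = exp(−2πi/N)`,
at 1-based row `k` and column `l` (0-based indices here). -/
noncomputable def dftM (N : ℕ) : Matrix (Fin N) (Fin N) ℂ :=
  Matrix.of fun k l =>
    Complex.exp (-(2 * (Real.pi : ℂ) * Complex.I) / N) ^ ((k : ℕ) * (l : ℕ))

/-- The butterfly block `B_n := [[I_{n/2}, A_{n/2}], [I_{n/2}, −A_{n/2}]]`, where
`A_{n/2} = diag(1, ω_n, …, ω_n^{n/2−1})` and `ω_n = exp(−2πi/n)`. -/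
noncomputable def Bmat (n : ℕ) : Matrix (Fin n) (Fin n) ℂ :=
  Matrix.of fun k l =>
    if (k : ℕ) < n / 2 then
      if (l : ℕ) = (k : ℕ) then 1
      else if (l : ℕ) = (k : ℕ) + n / 2 then
        Complex.exp (-(2 * (Real.pi : ℂ) * Complex.I) / n) ^ (k : ℕ)
      else 0
    else
      if (l : ℕ) = (k : ℕ) - n / 2 then 1
      else if (l : ℕ) = (k : ℕ) then
        -Complex.exp (-(2 * (Real.pi : ℂ) * Complex.I) / n) ^ ((k : ℕ) - n / 2)
      else 0

/-- The permutation matrix `P_n` with `(P_n)_{j, 2j−1} = 1` and `(P_n)_{n/2+j, 2j} = 1`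
for `1 ≤ j ≤ n/2` (1-based), i.e. `P_n x = (x_1, x_3, …, x_{n−1}, x_2, x_4, …, x_n)`. -/
noncomputable def Pmat (n : ℕ) : Matrix (Fin n) (Fin n) ℂ :=
  Matrix.of fun r c =>
    if (r : ℕ) < n / 2 then (if (c : ℕ) = 2 * (r : ℕ) then 1 else 0)
    else (if (c : ℕ) = 2 * ((r : ℕ) - n / 2) + 1 then 1 else 0)

/-- The Kronecker product `I_{2^{L−ℓ}} ⊗ M` for `M` of size `2^ℓ × 2^ℓ`, as a
`2^L × 2^L` block-diagonal matrix. -/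
noncomputable def blockDiag (L ℓ : ℕ) (M : Matrix (Fin (2 ^ ℓ)) (Fin (2 ^ ℓ)) ℂ) :
    Matrix (Fin (2 ^ L)) (Fin (2 ^ L)) ℂ :=
  Matrix.of fun i j =>
    if (i : ℕ) / 2 ^ ℓ = (j : ℕ) / 2 ^ ℓ then
      M ⟨(i : ℕ) % 2 ^ ℓ, Nat.mod_lt _ (Nat.two_pow_pos ℓ)⟩
        ⟨(j : ℕ) % 2 ^ ℓ, Nat.mod_lt _ (Nat.two_pow_pos ℓ)⟩
    else 0

/-- The butterfly factor `F^(ℓ) := I_{2^{L−ℓ}} ⊗ B_{2^ℓ}`. -/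
noncomputable def Fbut (L ℓ : ℕ) : Matrix (Fin (2 ^ L)) (Fin (2 ^ L)) ℂ :=
  blockDiag L ℓ (Bmat (2 ^ ℓ))

/-- `Q_ℓ := I_{N/2^ℓ} ⊗ P_{2^ℓ}`. -/
noncomputable def Qmat (L ℓ : ℕ) : Matrix (Fin (2 ^ L)) (Fin (2 ^ L)) ℂ :=
  blockDiag L ℓ (Pmat (2 ^ ℓ))

/-- The bit-reversal permutation matrix `R_N := Q_1 Q_2 ⋯ Q_L`. -/
noncomputable def Rmat (L : ℕ) : Matrix (Fin (2 ^ L)) (Fin (2 ^ L)) ℂ :=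
  ((List.range' 1 L).map (Qmat L)).prod

namespace BFaux

/-- bit reversal of the low `k` bits -/
def nrev : ℕ → ℕ → ℕ
  | 0, _ => 0
  | (k+1), a => 2 * nrev k (a % 2^k) + a / 2^k % 2

lemma nrev_lt (k a : ℕ) : nrev k a < 2^k := by
  induction k generalizing a with
  | zero => simp [nrev]
  | succ k ih =>
    have h1 := ih (a % 2^k)
    have h2 : a / 2^k % 2 < 2 := Nat.mod_lt _ (by norm_num)
    simp only [nrev, pow_succ]
    omega

lemma testBit_nrev (k a t : ℕ) :
    (nrev k a).testBit t = if t < k then a.testBit (k - 1 - t) else false := by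
  induction k generalizing a t with
  | zero => simp [nrev]
  | succ k ih =>
    have h2 : a / 2^k % 2 < 2 := Nat.mod_lt _ (by norm_num)
    cases t with
    | zero =>
      simp only [nrev, Nat.testBit_zero, Nat.testBit_eq_decide_div_mod_eq]
      have : (2 * nrev k (a % 2^k) + a / 2^k % 2) % 2 = a / 2^k % 2 := by omega
      simp [this]
    | succ t =>
      rw [Nat.testBit_add_one]
      have hd : nrev (k+1) a / 2 = nrev k (a % 2^k) := by simp only [nrev]; omega
      rw [hd, ih]
      rcases Nat.lt_or_ge t k with h | h
      · have h3 : k - 1 - t < k := by omega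
        rw [if_pos h, if_pos (by omega : t + 1 < k + 1), Nat.testBit_mod_two_pow]
        have he : k + 1 - 1 - (t+1) = k - 1 - t := by omega
        rw [he]
        simp [h3]
      · rw [if_neg (by omega : ¬ t < k), if_neg (by omega : ¬ (t + 1 < k + 1))]

lemma nrev_mod (k a : ℕ) : nrev k (a % 2^k) = nrev k a := by
  apply Nat.eq_of_testBit_eq
  intro t
  rw [testBit_nrev, testBit_nrev]
  split
  · next h =>
    rw [Nat.testBit_mod_two_pow]
    simp [show k - 1 - t < k by omega]
  · rfl

lemma nrev_nrev {k a : ℕ} (h : a < 2^k) : nrev k (nrev k a) = a := by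
  apply Nat.eq_of_testBit_eq
  intro t
  rw [testBit_nrev]
  split
  · next ht =>
    rw [testBit_nrev]
    have h1 : k - 1 - t < k := by omega
    rw [if_pos h1]
    congr 1
    omega
  · next ht =>
    exact (Nat.testBit_eq_false_of_lt
      (lt_of_lt_of_le h (Nat.pow_le_pow_right (by norm_num) (by omega)))).symm

lemma bitval (x i : ℕ) : x / 2^i % 2 = if x.testBit i then 1 else 0 := by
  rw [Nat.testBit_eq_decide_div_mod_eq]
  rcases (by omega : x / 2^i % 2 = 0 ∨ x / 2^i % 2 = 1) with h | h <;> simp [h]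

lemma bitval_mod {x i k : ℕ} (h : i < k) : x % 2^k / 2^i % 2 = x / 2^i % 2 := by
  rw [bitval, bitval, Nat.testBit_mod_two_pow]
  simp [h]

lemma nrev_sum (k a : ℕ) :
    nrev k a = ∑ m ∈ Finset.Ico 1 (k+1), 2^(k-m) * (a / 2^(m-1) % 2) := by
  induction k generalizing a with
  | zero => simp [nrev]
  | succ k ih =>
    rw [Finset.sum_Ico_succ_top (by omega)]
    simp only [nrev]
    rw [ih (a % 2^k), Finset.mul_sum]
    have hc : ∀ m ∈ Finset.Ico 1 (k+1),
        2 * (2^(k-m) * (a % 2^k / 2^(m-1) % 2)) = 2^(k+1-m) * (a / 2^(m-1) % 2) := by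
      intro m hm
      simp only [Finset.mem_Ico] at hm
      rw [bitval_mod (by omega), ← mul_assoc]
      congr 1
      rw [← pow_succ']
      congr 1
      omega
    rw [Finset.sum_congr rfl hc]
    have : k + 1 - (k+1) = 0 := by omega
    rw [this]
    simp

lemma half_pow {m : ℕ} (hm : 1 ≤ m) : 2^m / 2 = 2^(m-1) ∧ 2^m = 2 * 2^(m-1) := by
  constructor
  · conv_lhs => rw [show m = (m-1)+1 by omega, pow_succ]
    exact Nat.mul_div_cancel _ (by norm_num)
  · rw [← pow_succ']
    congr 1
    omega

lemma omega_ne_zero (n : ℕ) (r : ℕ) :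
    Complex.exp (-(2 * (Real.pi : ℂ) * Complex.I) / n) ^ r ≠ 0 :=
  pow_ne_zero _ (Complex.exp_ne_zero _)

/-- closed form for `Bmat` entries on its support -/
lemma Bmat_apply {m : ℕ} (hm : 1 ≤ m) (k l : Fin (2^m)) (r b c : ℕ)
    (hr : r < 2^(m-1)) (hb : b < 2) (hc : c < 2)
    (hk : (k : ℕ) = r + 2^(m-1) * b) (hl : (l : ℕ) = r + 2^(m-1) * c) :
    Bmat (2^m) k l =
      if c = 1 then (-1:ℂ)^b * Complex.exp (-(2 * (Real.pi : ℂ) * Complex.I) / (2^m : ℕ)) ^ r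
      else 1 := by
  obtain ⟨h2, _⟩ := half_pow hm
  have hpos : 0 < 2^(m-1) := Nat.two_pow_pos (m-1)
  simp only [Bmat, Matrix.of_apply, h2, hk, hl]
  interval_cases b <;> interval_cases c <;>
      simp only [mul_zero, mul_one, add_zero, pow_zero, pow_one, one_mul]
  · rw [if_pos (by omega)]; simp
  · rw [if_pos (by omega), if_neg (by omega)]; simp
  · rw [if_neg (by omega), if_pos (by omega)]; simp
  · rw [if_neg (by omega), if_neg (by omega),
      show r + 2^(m-1) - 2^(m-1) = r by omega]; simp

lemma Bmat_eq_zero {m : ℕ} (hm : 1 ≤ m) (k l : Fin (2^m))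
    (h : (l : ℕ) % 2^(m-1) ≠ (k : ℕ) % 2^(m-1)) : Bmat (2^m) k l = 0 := by
  obtain ⟨h2, hm2⟩ := half_pow hm
  have hk2 := k.2
  simp only [Bmat, Matrix.of_apply, h2]
  split_ifs with c1 c2 c3 c4 c5 <;> try rfl
  · exact absurd (by rw [c2]) h
  · exact absurd (by rw [c3, Nat.add_mod_right]) h
  · refine absurd ?_ h
    rw [c4, ← Nat.mod_eq_sub_mod (by omega)]
  · exact absurd (by rw [c5]) h

lemma blockDiag_apply {L ℓ : ℕ} (M : Matrix (Fin (2^ℓ)) (Fin (2^ℓ)) ℂ) (i j : Fin (2^L)) :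
    blockDiag L ℓ M i j =
      if (i : ℕ) / 2^ℓ = (j : ℕ) / 2^ℓ then
        M ⟨(i : ℕ) % 2^ℓ, Nat.mod_lt _ (Nat.two_pow_pos ℓ)⟩
          ⟨(j : ℕ) % 2^ℓ, Nat.mod_lt _ (Nat.two_pow_pos ℓ)⟩
      else 0 := rfl

lemma mod_mul_decomp (a b c : ℕ) (hb : 0 < b) : a % (b*c) = a % b + b * (a / b % c) := by
  conv_lhs => rw [← Nat.mod_add_div (a % (b*c)) b]
  rw [Nat.mod_mod_of_dvd _ ⟨c, rfl⟩, Nat.mod_mul_right_div_self]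

lemma mod_pow_decomp {m : ℕ} (hm : 1 ≤ m) (a : ℕ) :
    a % 2^m = a % 2^(m-1) + 2^(m-1) * (a / 2^(m-1) % 2) := by
  conv_lhs => rw [(half_pow hm).2, mul_comm]
  exact mod_mul_decomp a _ 2 (Nat.two_pow_pos _)

lemma Fbut_eq_zero {L m : ℕ} (hm : 1 ≤ m) (i j : Fin (2^L))
    (h : ¬ ((i : ℕ)/2^m = (j : ℕ)/2^m ∧ (i : ℕ) % 2^(m-1) = (j : ℕ) % 2^(m-1))) :
    Fbut L m i j = 0 := by
  rw [Fbut, blockDiag_apply]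
  split_ifs with c1
  · refine Bmat_eq_zero hm _ _ ?_
    have hd : (2:ℕ)^(m-1) ∣ 2^m := pow_dvd_pow 2 (by omega)
    simp only [Nat.mod_mod_of_dvd _ hd]
    intro hc
    exact h ⟨c1, hc.symm⟩
  · rfl

lemma Fbut_apply_supp {L m : ℕ} (hm : 1 ≤ m) (i j : Fin (2^L))
    (hdiv : (i : ℕ)/2^m = (j : ℕ)/2^m) (hmod : (i : ℕ) % 2^(m-1) = (j : ℕ) % 2^(m-1)) :
    Fbut L m i j =
      if (j : ℕ)/2^(m-1) % 2 = 1 then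
        (-1:ℂ)^((i : ℕ)/2^(m-1) % 2) *
          Complex.exp (-(2 * (Real.pi : ℂ) * Complex.I) / ((2:ℕ)^m : ℕ)) ^ ((i : ℕ) % 2^(m-1))
      else 1 := by
  rw [Fbut, blockDiag_apply, if_pos hdiv]
  exact Bmat_apply hm _ _ ((i : ℕ) % 2^(m-1)) ((i : ℕ)/2^(m-1) % 2) ((j : ℕ)/2^(m-1) % 2)
    (Nat.mod_lt _ (Nat.two_pow_pos _)) (Nat.mod_lt _ (by norm_num)) (Nat.mod_lt _ (by norm_num))
    (mod_pow_decomp hm _) (by show ((j:ℕ) % 2^m) = _; rw [mod_pow_decomp hm, hmod])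

lemma Fbut_diag_ne_zero {L m : ℕ} (hm : 1 ≤ m) (i : Fin (2^L)) : Fbut L m i i ≠ 0 := by
  rw [Fbut_apply_supp hm i i rfl rfl]
  split_ifs
  · exact mul_ne_zero (pow_ne_zero _ (by norm_num)) (omega_ne_zero _ _)
  · norm_num

def sigk (k a : ℕ) : ℕ := a / 2^k * 2^k + nrev k a

def rotL (m r : ℕ) : ℕ := 2 * (r % 2^(m-1)) + r / 2^(m-1)

def pim (m a : ℕ) : ℕ := a / 2^m * 2^m + rotL m (a % 2^m)

def isPerm {n : ℕ} (M : Matrix (Fin n) (Fin n) ℂ) (σ : ℕ → ℕ) : Prop :=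
  ∀ a b : Fin n, M a b = if (b : ℕ) = σ (a : ℕ) then 1 else 0

lemma isPerm_congr {n : ℕ} {M : Matrix (Fin n) (Fin n) ℂ} {σ σ' : ℕ → ℕ}
    (h : isPerm M σ) (he : ∀ a : Fin n, σ (a : ℕ) = σ' (a : ℕ)) : isPerm M σ' := by
  intro a b
  rw [h a b, he a]

lemma isPerm_one {n : ℕ} : isPerm (1 : Matrix (Fin n) (Fin n) ℂ) id := by
  intro a b
  simp [Matrix.one_apply, Fin.ext_iff, eq_comm]

lemma isPerm_mul {n : ℕ} {M M' : Matrix (Fin n) (Fin n) ℂ} {σ τ : ℕ → ℕ}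
    (hσ : ∀ a, a < n → σ a < n) (hM : isPerm M σ) (hM' : isPerm M' τ) :
    isPerm (M * M') (fun a => τ (σ a)) := by
  intro a b
  rw [Matrix.mul_apply]
  rw [Finset.sum_eq_single (⟨σ (a:ℕ), hσ _ a.2⟩ : Fin n)]
  · rw [hM a _, hM' _ b]
    simp
  · intro c _ hc
    rw [hM a c, if_neg (fun hcc => hc (Fin.ext hcc)), zero_mul]
  · intro h
    exact absurd (Finset.mem_univ _) h

lemma rotL_lt {m : ℕ} (hm : 1 ≤ m) {r : ℕ} (hr : r < 2^m) : rotL m r < 2^m := by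
  obtain ⟨h2, hm2⟩ := half_pow hm
  have h1 : r % 2^(m-1) < 2^(m-1) := Nat.mod_lt _ (Nat.two_pow_pos _)
  have h3 : r / 2^(m-1) < 2 := by
    rw [Nat.div_lt_iff_lt_mul (Nat.two_pow_pos _)]
    omega
  rw [rotL, hm2]
  omega

lemma Pmat_apply {m : ℕ} (hm : 1 ≤ m) (r c : Fin (2^m)) :
    Pmat (2^m) r c = if (c : ℕ) = rotL m (r : ℕ) then 1 else 0 := by
  obtain ⟨h2, hm2⟩ := half_pow hm
  have hr2 := r.2
  rcases Nat.lt_or_ge (r : ℕ) (2^(m-1)) with c1 | c1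
  · simp only [Pmat, Matrix.of_apply, h2, rotL, Nat.mod_eq_of_lt c1, Nat.div_eq_of_lt c1,
      if_pos c1, add_zero]
  · have e1 : (r : ℕ) % 2^(m-1) = (r : ℕ) - 2^(m-1) := by
      rw [Nat.mod_eq_sub_mod c1, Nat.mod_eq_of_lt (by omega)]
    have e2 : (r : ℕ) / 2^(m-1) = 1 := by
      rw [Nat.div_eq_sub_div (Nat.two_pow_pos _) c1, Nat.div_eq_of_lt (by omega)]
    simp only [Pmat, Matrix.of_apply, h2, rotL, e1, e2, if_neg (by omega : ¬ (r:ℕ) < 2^(m-1))]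

lemma Qmat_isPerm {L m : ℕ} (hm : 1 ≤ m) : isPerm (Qmat L m) (pim m) := by
  intro a b
  have hR : rotL m ((a : ℕ) % 2^m) < 2^m := rotL_lt hm (Nat.mod_lt _ (Nat.two_pow_pos _))
  have hbd : 2^m * ((b:ℕ) / 2^m) + (b:ℕ) % 2^m = (b:ℕ) := Nat.div_add_mod _ _
  rw [Qmat, blockDiag_apply]
  by_cases c1 : (a:ℕ) / 2^m = (b:ℕ) / 2^m
  · rw [if_pos c1, Pmat_apply hm]
    by_cases hc : (b:ℕ) % 2^m = rotL m ((a:ℕ) % 2^m)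
    · rw [if_pos hc, if_pos (show (b:ℕ) = pim m (a:ℕ) from by
        rw [pim, c1, ← hc, mul_comm]; exact hbd.symm)]
    · rw [if_neg hc, if_neg (show ¬ (b:ℕ) = pim m (a:ℕ) from fun hb => hc (by
        rw [hb, pim, show (a:ℕ)/2^m*2^m + rotL m ((a:ℕ)%2^m)
            = rotL m ((a:ℕ)%2^m) + 2^m*((a:ℕ)/2^m) from by ring,
          Nat.add_mul_mod_self_left, Nat.mod_eq_of_lt hR]))]
  · rw [if_neg c1, if_neg (show ¬ (b:ℕ) = pim m (a:ℕ) from fun hb => c1 (by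
      rw [hb, pim, show (a:ℕ)/2^m*2^m + rotL m ((a:ℕ)%2^m)
          = rotL m ((a:ℕ)%2^m) + 2^m*((a:ℕ)/2^m) from by ring,
        Nat.add_mul_div_left _ _ (Nat.two_pow_pos m), Nat.div_eq_of_lt hR, zero_add]))]

lemma pim_sigk (k a : ℕ) : pim (k+1) (sigk k a) = sigk (k+1) a := by
  have hr : nrev k a < 2^k := nrev_lt k a
  have hQ : a / 2^k = 2 * (a / 2^k / 2) + a / 2^k % 2 := (Nat.div_add_mod _ 2).symm
  have hdd : a / 2^k / 2 = a / 2^(k+1) := by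
    rw [Nat.div_div_eq_div_mul, ← pow_succ]
  have hb : sigk k a = (a / 2^k % 2 * 2^k + nrev k a) + 2^(k+1) * (a / 2^(k+1)) := by
    rw [sigk]
    conv_lhs => rw [hQ, hdd]
    ring
  have hx : a / 2^k % 2 * 2^k + nrev k a < 2^(k+1) := by
    have : a / 2^k % 2 < 2 := Nat.mod_lt _ (by norm_num)
    have h1 : a / 2^k % 2 * 2^k ≤ 2^k := by nlinarith
    rw [pow_succ]
    omega
  have hdiv : sigk k a / 2^(k+1) = a / 2^(k+1) := by
    rw [hb, Nat.add_mul_div_left _ _ (Nat.two_pow_pos _), Nat.div_eq_of_lt hx, zero_add]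
  have hmod : sigk k a % 2^(k+1) = a / 2^k % 2 * 2^k + nrev k a := by
    rw [hb, Nat.add_mul_mod_self_left, Nat.mod_eq_of_lt hx]
  rw [pim, hdiv, hmod]
  have hrot : rotL (k+1) (a / 2^k % 2 * 2^k + nrev k a) = 2 * nrev k a + a / 2^k % 2 := by
    rw [rotL]
    simp only [Nat.add_sub_cancel]
    rw [show a / 2^k % 2 * 2^k + nrev k a = nrev k a + 2^k * (a / 2^k % 2) by ring,
      Nat.add_mul_mod_self_left, Nat.mod_eq_of_lt hr,
      Nat.add_mul_div_left _ _ (Nat.two_pow_pos _), Nat.div_eq_of_lt hr, zero_add]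
  rw [hrot, sigk]
  have : nrev (k+1) a = 2 * nrev k (a % 2^k) + a / 2^k % 2 := rfl
  rw [this, nrev_mod]

lemma sigk_lt {L k a : ℕ} (hk : k ≤ L) (ha : a < 2^L) : sigk k a < 2^L := by
  have hq : a / 2^k < 2^(L-k) := by
    rw [Nat.div_lt_iff_lt_mul (Nat.two_pow_pos _), ← pow_add]
    rwa [show L - k + k = L by omega]
  have h1 : sigk k a < (a/2^k + 1) * 2^k := by
    rw [sigk, add_mul, one_mul]
    exact Nat.add_lt_add_left (nrev_lt k a) _
  have h2 : (a/2^k + 1) * 2^k ≤ 2^(L-k) * 2^k := Nat.mul_le_mul_right _ (by omega)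
  rw [← pow_add, show L - k + k = L by omega] at h2
  omega

lemma Rmat_isPerm (L : ℕ) : isPerm (Rmat L) (nrev L) := by
  have main : ∀ k, k ≤ L → isPerm (((List.range' 1 k).map (Qmat L)).prod) (sigk k) := by
    intro k
    induction k with
    | zero =>
      intro _
      refine isPerm_congr isPerm_one ?_
      intro a
      simp [sigk, nrev]
    | succ k ih =>
      intro hk
      rw [show List.range' 1 (k+1) = List.range' 1 k ++ [k+1] from by
        rw [List.range'_concat]; simp [Nat.add_comm], List.map_append, List.prod_append]
      simp only [List.map_cons, List.map_nil, List.prod_cons, List.prod_nil, mul_one]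
      refine isPerm_congr (isPerm_mul ?_ (ih (by omega)) (Qmat_isPerm (by omega))) ?_
      · intro a ha
        exact sigk_lt (by omega) ha
      · intro a
        exact pim_sigk k (a : ℕ)
  refine isPerm_congr (main L le_rfl) ?_
  intro a
  rw [sigk, Nat.div_eq_of_lt a.2, zero_mul, zero_add]

/-- the unique path index at level `m` for row `i` and reversed column `t` -/
def ee (m i t : ℕ) : ℕ := i % 2^m + 2^m * (t / 2^m)

lemma ee_lt {L : ℕ} (m : ℕ) {i t : ℕ} (hi : i < 2^L) (ht : t < 2^L) : ee m i t < 2^L := by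
  rcases le_or_gt m L with h | h
  · have h1 : i % 2^m < 2^m := Nat.mod_lt _ (Nat.two_pow_pos _)
    have h2 : t / 2^m < 2^(L-m) := by
      rw [Nat.div_lt_iff_lt_mul (Nat.two_pow_pos _), ← pow_add, show L - m + m = L by omega]
      exact ht
    calc ee m i t < 2^m * (t / 2^m + 1) := by rw [ee]; ring_nf; omega
    _ ≤ 2^m * 2^(L-m) := Nat.mul_le_mul_left _ (by omega)
    _ = 2^L := by rw [← pow_add]; congr 1; omega
  · have : t / 2^m = 0 := Nat.div_eq_of_lt (lt_trans ht (Nat.pow_lt_pow_right (by norm_num) h))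
    rw [ee, this, mul_zero, add_zero]
    exact lt_of_le_of_lt (Nat.mod_le _ _) hi

lemma ee_mod_pow {s m : ℕ} (h : s ≤ m) (i t : ℕ) : ee m i t % 2^s = i % 2^s := by
  rw [ee, show 2^m * (t / 2^m) = 2^s * (2^(m-s) * (t / 2^m)) from by
      rw [← mul_assoc, ← pow_add]; congr 2; omega,
    Nat.add_mul_mod_self_left, Nat.mod_mod_of_dvd _ (pow_dvd_pow 2 h)]

lemma ee_div_pow {s m : ℕ} (h : m ≤ s) (i t : ℕ) : ee m i t / 2^s = t / 2^s := by
  rw [show (2:ℕ)^s = 2^m * 2^(s-m) from by rw [← pow_add]; congr 1; omega,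
    ← Nat.div_div_eq_div_mul, ← Nat.div_div_eq_div_mul, ee,
    Nat.add_mul_div_left _ _ (Nat.two_pow_pos m),
    Nat.div_eq_of_lt (Nat.mod_lt _ (Nat.two_pow_pos m)), zero_add]

lemma ee_eq_left {m i t : ℕ} (h : t / 2^m = i / 2^m) : ee m i t = i := by
  rw [ee, h, Nat.mod_add_div]

lemma ee_eq_right {m i t : ℕ} (h : i % 2^m = t % 2^m) : ee m i t = t := by
  rw [ee, h, Nat.mod_add_div]

lemma div_pow_mono {a b r s : ℕ} (h : a / 2^r = b / 2^r) (hrs : r ≤ s) :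
    a / 2^s = b / 2^s := by
  rw [show (2:ℕ)^s = 2^r * 2^(s-r) from by rw [← pow_add]; congr 1; omega,
    ← Nat.div_div_eq_div_mul, ← Nat.div_div_eq_div_mul, h]

lemma mod_pow_mono {a b r s : ℕ} (h : a % 2^r = b % 2^r) (hsr : s ≤ r) :
    a % 2^s = b % 2^s := by
  rw [← Nat.mod_mod_of_dvd a (pow_dvd_pow 2 hsr), ← Nat.mod_mod_of_dvd b (pow_dvd_pow 2 hsr), h]

lemma dft_ne_zero {N : ℕ} (i j : Fin N) : dftM N i j ≠ 0 := by
  exact pow_ne_zero _ (Complex.exp_ne_zero _)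

/-- `F^(1) R` entries -/
lemma FbutRmat_apply (L : ℕ) (k j : Fin (2^L)) :
    (Fbut L 1 * Rmat L) k j = Fbut L 1 k ⟨nrev L (j : ℕ), nrev_lt L _⟩ := by
  rw [Matrix.mul_apply]
  rw [Finset.sum_eq_single (⟨nrev L (j : ℕ), nrev_lt L _⟩ : Fin (2^L))]
  · rw [Rmat_isPerm L, if_pos (by simp [nrev_nrev j.2]), mul_one]
  · intro c _ hc
    rw [Rmat_isPerm L, if_neg, mul_zero]
    intro hj
    apply hc
    apply Fin.ext
    simp only
    rw [hj, nrev_nrev c.2]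
  · intro h
    exact absurd (Finset.mem_univ _) h

def eeF (L m : ℕ) (i t : Fin (2^L)) : Fin (2^L) := ⟨ee m (i:ℕ) (t:ℕ), ee_lt (L:=L) m i.2 t.2⟩

lemma ee_ee {m q i b : ℕ} (h : q ≤ m) : ee m i (ee q i b) = ee m i b := by
  rw [show ee m i (ee q i b) = i % 2^m + 2^m * (ee q i b / 2^m) from rfl, ee_div_pow h, ee]

def revF (L : ℕ) (j : Fin (2^L)) : Fin (2^L) := ⟨nrev L (j:ℕ), nrev_lt L _⟩

noncomputable def tp (L : ℕ) (Y : ℕ → Matrix (Fin (2^L)) (Fin (2^L)) ℂ) (q : ℕ) :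
    Matrix (Fin (2^L)) (Fin (2^L)) ℂ :=
  (((List.range' (q+1) (L-q)).reverse).map Y).prod

lemma tp_succ {L : ℕ} (Y : ℕ → Matrix (Fin (2^L)) (Fin (2^L)) ℂ) {q : ℕ} (h : q < L) :
    tp L Y q = tp L Y (q+1) * Y (q+1) := by
  rw [tp, show L - q = (L - (q+1)) + 1 by omega, List.range'_succ, List.reverse_cons,
    List.map_append, List.prod_append, tp]
  simp

lemma tp_apply {L : ℕ} (Y : ℕ → Matrix (Fin (2^L)) (Fin (2^L)) ℂ)
    (hs : ∀ m, 2 ≤ m → m ≤ L → ∀ a b : Fin (2^L), Y m a b ≠ 0 →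
      (a:ℕ)/2^m = (b:ℕ)/2^m ∧ (a:ℕ)%2^(m-1) = (b:ℕ)%2^(m-1)) :
    ∀ dq q, q + dq = L → 1 ≤ q → ∀ i b : Fin (2^L),
      tp L Y q i b = if (b:ℕ)%2^q = (i:ℕ)%2^q then
        ∏ m ∈ Finset.Ico (q+1) (L+1), Y m (eeF L m i b) (eeF L (m-1) i b) else 0 := by
  intro dq
  induction dq with
  | zero =>
    intro q hq _ i b
    rw [show q = L by omega]
    have h1 : tp L Y L = 1 := by rw [tp, Nat.sub_self]; rfl
    rw [h1, Matrix.one_apply]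
    simp only [Nat.mod_eq_of_lt b.2, Nat.mod_eq_of_lt i.2, Finset.Ico_self, Finset.prod_empty]
    by_cases h : i = b
    · rw [if_pos h, if_pos (by rw [h])]
    · rw [if_neg h, if_neg (fun hc => h (Fin.ext hc.symm))]
  | succ dq ih =>
    intro q hq hq1 i b
    have hqL : q < L := by omega
    have ihq := ih (q+1) (by omega) (by omega)
    rw [tp_succ Y hqL, Matrix.mul_apply]
    by_cases hcond : (b:ℕ)%2^q = (i:ℕ)%2^q
    · rw [Finset.sum_eq_single (eeF L (q+1) i b)]
      · rw [ihq i _, if_pos (show ((eeF L (q+1) i b : Fin (2^L)):ℕ)%2^(q+1) = (i:ℕ)%2^(q+1)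
          from ee_mod_pow le_rfl _ _), if_pos hcond]
        have hfac : ∀ m ∈ Finset.Ico (q+2) (L+1),
            Y m (eeF L m i (eeF L (q+1) i b)) (eeF L (m-1) i (eeF L (q+1) i b))
              = Y m (eeF L m i b) (eeF L (m-1) i b) := by
          intro m hm
          simp only [Finset.mem_Ico] at hm
          congr 1 <;> exact Fin.ext (ee_ee (by omega))
        rw [Finset.prod_congr rfl hfac,
          Finset.prod_eq_prod_Ico_succ_bot (show q+1 < L+1 by omega)]
        have hb : eeF L q i b = b := Fin.ext (ee_eq_right hcond.symm)
        simp only [Nat.add_sub_cancel, hb]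
        ring
      · intro c _ hc
        by_cases h1 : Y (q+1) c b = 0
        · rw [h1, mul_zero]
        · obtain ⟨hdiv, _⟩ := hs (q+1) (by omega) (by omega) c b h1
          rw [ihq i c]
          split_ifs with h2
          · exfalso
            apply hc
            apply Fin.ext
            show (c:ℕ) = ee (q+1) (i:ℕ) (b:ℕ)
            conv_lhs => rw [← Nat.mod_add_div (c:ℕ) (2^(q+1))]
            rw [h2, hdiv, ee]
          · rw [zero_mul]
      · intro h
        exact absurd (Finset.mem_univ _) h
    · rw [if_neg hcond]
      apply Finset.sum_eq_zero
      intro c _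
      by_cases h1 : Y (q+1) c b = 0
      · rw [h1, mul_zero]
      · obtain ⟨_, hmod⟩ := hs (q+1) (by omega) (by omega) c b h1
        simp only [Nat.add_sub_cancel] at hmod
        rw [ihq i c]
        split_ifs with h2
        · exact absurd ((hmod.symm.trans (mod_pow_mono h2 (by omega)))) hcond
        · rw [zero_mul]

lemma pprod_apply {L : ℕ} (hL : 1 ≤ L) (Y : ℕ → Matrix (Fin (2^L)) (Fin (2^L)) ℂ)
    (hs : ∀ m, 2 ≤ m → m ≤ L → ∀ a b : Fin (2^L), Y m a b ≠ 0 →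
      (a:ℕ)/2^m = (b:ℕ)/2^m ∧ (a:ℕ)%2^(m-1) = (b:ℕ)%2^(m-1))
    (hs1 : ∀ a b : Fin (2^L), Y 1 a b ≠ 0 → (a:ℕ)/2^1 = (nrev L (b:ℕ))/2^1)
    (i j : Fin (2^L)) :
    pprod Y L 1 i j =
      (∏ m ∈ Finset.Ico 2 (L+1), Y m (eeF L m i (revF L j)) (eeF L (m-1) i (revF L j)))
        * Y 1 (eeF L 1 i (revF L j)) j := by
  have h0 : pprod Y L 1 = tp L Y 0 := by rw [pprod, tp]; simp
  rw [h0, tp_succ Y (by omega : 0 < L), Matrix.mul_apply]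
  rw [Finset.sum_eq_single (eeF L 1 i (revF L j))]
  · rw [tp_apply Y hs (L-1) 1 (by omega) le_rfl i _,
      if_pos (show ((eeF L 1 i (revF L j) : Fin (2^L)):ℕ)%2^1 = (i:ℕ)%2^1
        from ee_mod_pow le_rfl _ _)]
    congr 1
    apply Finset.prod_congr rfl
    intro m hm
    simp only [Finset.mem_Ico] at hm
    congr 1 <;> exact Fin.ext (ee_ee (by omega))
  · intro c _ hc
    by_cases h1 : Y 1 c j = 0
    · rw [h1, mul_zero]
    · have hdiv := hs1 c j h1
      rw [tp_apply Y hs (L-1) 1 (by omega) le_rfl i c]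
      split_ifs with h2
      · exfalso
        apply hc
        apply Fin.ext
        show (c:ℕ) = ee 1 (i:ℕ) ((revF L j : Fin (2^L)):ℕ)
        conv_lhs => rw [← Nat.mod_add_div (c:ℕ) (2^1)]
        rw [h2, hdiv, ee]
        rfl
      · rw [zero_mul]
  · intro h
    exact absurd (Finset.mem_univ _) h

lemma ee_zero (i t : ℕ) : ee 0 i t = t := by simp [ee, Nat.mod_one]

lemma omega_pow_L {L m : ℕ} (hm : 1 ≤ m) (hmL : m ≤ L) :
    Complex.exp (-(2 * (Real.pi : ℂ) * Complex.I) / ((2^m : ℕ) : ℂ)) =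
      Complex.exp (-(2 * (Real.pi : ℂ) * Complex.I) / ((2^L : ℕ) : ℂ)) ^ (2^(L-m)) := by
  rw [← Complex.exp_nat_mul]
  congr 1
  have h1 : ((2:ℂ)^m) ≠ 0 := pow_ne_zero _ (by norm_num)
  have h2 : ((2:ℂ)^L) ≠ 0 := pow_ne_zero _ (by norm_num)
  push_cast
  rw [show (2:ℂ)^L = 2^m * 2^(L-m) from by rw [← pow_add]; congr 1; omega]
  field_simp

lemma omega_pow_neg_one {L : ℕ} (hL : 1 ≤ L) :
    Complex.exp (-(2 * (Real.pi : ℂ) * Complex.I) / ((2^L : ℕ) : ℂ)) ^ (2^(L-1)) = -1 := by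
  rw [← Complex.exp_nat_mul]
  have h2 : ((2:ℂ)^L) ≠ 0 := pow_ne_zero _ (by norm_num)
  have harg : ((2^(L-1) : ℕ) : ℂ) * (-(2 * (Real.pi : ℂ) * Complex.I) / ((2^L : ℕ) : ℂ))
      = -((Real.pi : ℂ) * Complex.I) := by
    push_cast
    rw [show (2:ℂ)^L = 2 * 2^(L-1) from by rw [← pow_succ']; congr 1; omega]
    have h3 : ((2:ℂ)^(L-1)) ≠ 0 := pow_ne_zero _ (by norm_num)
    field_simp
  rw [harg, Complex.exp_neg, Complex.exp_pi_mul_I]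
  norm_num

lemma omega_pow_top (L : ℕ) :
    Complex.exp (-(2 * (Real.pi : ℂ) * Complex.I) / ((2^L : ℕ) : ℂ)) ^ (2^L) = 1 := by
  rw [← Complex.exp_nat_mul]
  have h2 : ((2^L : ℕ) : ℂ) ≠ 0 := by push_cast; exact pow_ne_zero _ (by norm_num)
  have h3 : ((2^L : ℕ) : ℂ) * (-(2 * (Real.pi : ℂ) * Complex.I) / ((2^L : ℕ) : ℂ))
      = -(2 * (Real.pi : ℂ) * Complex.I) := by field_simp
  rw [h3, Complex.exp_neg, Complex.exp_two_pi_mul_I]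
  norm_num

lemma Fbut_path_factor {L m : ℕ} (hm : 1 ≤ m) (hmL : m ≤ L) (i t : Fin (2^L)) :
    Fbut L m (eeF L m i t) (eeF L (m-1) i t) =
      Complex.exp (-(2 * (Real.pi : ℂ) * Complex.I) / ((2^L : ℕ) : ℂ))
        ^ (2^(L-m) * ((t:ℕ)/2^(m-1)%2) * ((i:ℕ)%2^m)) := by
  have hdiv : ((eeF L m i t : Fin (2^L)):ℕ)/2^m = ((eeF L (m-1) i t : Fin (2^L)):ℕ)/2^m := by
    show ee m (i:ℕ) (t:ℕ) / 2^m = ee (m-1) (i:ℕ) (t:ℕ) / 2^m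
    rw [ee_div_pow le_rfl, ee_div_pow (by omega)]
  have hmod : ((eeF L m i t : Fin (2^L)):ℕ)%2^(m-1) = ((eeF L (m-1) i t : Fin (2^L)):ℕ)%2^(m-1) := by
    show ee m (i:ℕ) (t:ℕ) % 2^(m-1) = ee (m-1) (i:ℕ) (t:ℕ) % 2^(m-1)
    rw [ee_mod_pow (by omega), ee_mod_pow le_rfl]
  rw [Fbut_apply_supp hm _ _ hdiv hmod]
  have e1 : ((eeF L (m-1) i t : Fin (2^L)):ℕ)/2^(m-1) % 2 = (t:ℕ)/2^(m-1) % 2 := by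
    show ee (m-1) (i:ℕ) (t:ℕ) / 2^(m-1) % 2 = _
    rw [ee_div_pow le_rfl]
  have e2 : ((eeF L m i t : Fin (2^L)):ℕ) % 2^(m-1) = (i:ℕ)%2^(m-1) :=
    ee_mod_pow (by omega) _ _
  have e3 : ((eeF L m i t : Fin (2^L)):ℕ)/2^(m-1) % 2 = (i:ℕ)/2^(m-1) % 2 := by
    rw [← bitval_mod (show m-1 < m by omega),
      show ((eeF L m i t : Fin (2^L)):ℕ) % 2^m = (i:ℕ)%2^m from ee_mod_pow le_rfl _ _,
      bitval_mod (show m-1 < m by omega)]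
  rw [e1, e2, e3]
  have htb : (t:ℕ)/2^(m-1)%2 = 0 ∨ (t:ℕ)/2^(m-1)%2 = 1 := by omega
  rcases htb with htb | htb
  · rw [htb, if_neg (by norm_num), mul_zero, zero_mul, pow_zero]
  · rw [htb, if_pos rfl, mul_one]
    rw [mod_pow_decomp hm (i:ℕ),
      show 2^(L-m) * ((i:ℕ)%2^(m-1) + 2^(m-1)*((i:ℕ)/2^(m-1)%2))
        = 2^(L-m)*((i:ℕ)%2^(m-1)) + 2^(L-1)*((i:ℕ)/2^(m-1)%2) from by
          rw [mul_add, ← mul_assoc, ← pow_add, show L-m+(m-1) = L-1 by omega],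
      pow_add, pow_mul, pow_mul, omega_pow_neg_one (by omega), ← omega_pow_L hm hmL]
    ring

lemma term_split {L m : ℕ} (hmL : m ≤ L) (tb I : ℕ) :
    2^(L-m) * tb * I = 2^(L-m) * tb * (I%2^m) + 2^L * (tb * (I/2^m)) := by
  conv_lhs => rw [show I = I%2^m + 2^m*(I/2^m) from (Nat.mod_add_div _ _).symm]
  rw [show (2:ℕ)^L = 2^(L-m)*2^m from by rw [← pow_add]; congr 1; omega]
  ring

lemma dft_path {L : ℕ} (hL : 1 ≤ L) (i j : Fin (2^L)) :
    dftM (2^L) i j =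
      (∏ m ∈ Finset.Ico 2 (L+1), Fbut L m (eeF L m i (revF L j)) (eeF L (m-1) i (revF L j)))
        * (Fbut L 1 * Rmat L) (eeF L 1 i (revF L j)) j := by
  have hlast : (Fbut L 1 * Rmat L) (eeF L 1 i (revF L j)) j
      = Fbut L 1 (eeF L 1 i (revF L j)) (eeF L 0 i (revF L j)) := by
    rw [FbutRmat_apply]
    congr 1
    apply Fin.ext
    show nrev L (j:ℕ) = ee 0 (i:ℕ) (nrev L (j:ℕ))
    rw [ee_zero]
  rw [hlast, show (1:ℕ) = 1 - 1 + 1 from rfl]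
  rw [show Fbut L (1-1+1) (eeF L (1-1+1) i (revF L j)) (eeF L 0 i (revF L j))
      = Fbut L 1 (eeF L 1 i (revF L j)) (eeF L (1-1) i (revF L j)) from rfl]
  rw [mul_comm, ← Finset.prod_eq_prod_Ico_succ_bot (show 1 < L+1 by omega)
    (fun m => Fbut L m (eeF L m i (revF L j)) (eeF L (m-1) i (revF L j)))]
  rw [Finset.prod_congr rfl (fun m hm => by
    simp only [Finset.mem_Ico] at hm
    exact Fbut_path_factor (by omega) (by omega) i (revF L j))]
  rw [Finset.prod_pow_eq_pow_sum]
  set t : ℕ := nrev L (j:ℕ) with ht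
  set ω : ℂ := Complex.exp (-(2 * (Real.pi : ℂ) * Complex.I) / ((2^L : ℕ) : ℂ)) with hω
  have key : (j:ℕ)*(i:ℕ) =
      (∑ m ∈ Finset.Ico 1 (L+1), 2^(L-m) * (t/2^(m-1)%2) * ((i:ℕ)%2^m))
        + 2^L * (∑ m ∈ Finset.Ico 1 (L+1), (t/2^(m-1)%2) * ((i:ℕ)/2^m)) := by
    conv_lhs => rw [show (j:ℕ) = nrev L t from by rw [ht, nrev_nrev j.2]]
    rw [nrev_sum, Finset.sum_mul, Finset.mul_sum, ← Finset.sum_add_distrib]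
    apply Finset.sum_congr rfl
    intro m hm
    simp only [Finset.mem_Ico] at hm
    exact term_split (by omega) _ _
  show ω ^ ((i:ℕ)*(j:ℕ)) = _
  simp only [show ((revF L j : Fin (2^L)):ℕ) = t from rfl]
  rw [mul_comm (i:ℕ) (j:ℕ), key, pow_add, pow_mul, omega_pow_top, one_pow, mul_one]

lemma path_split {L : ℕ} (Y : ℕ → Matrix (Fin (2^L)) (Fin (2^L)) ℂ)
    {ℓ : ℕ} (hl2 : 2 ≤ ℓ) (hlL : ℓ ≤ L) (k k' : Fin (2^L))
    (hdiv : (k:ℕ)/2^ℓ = (k':ℕ)/2^ℓ) (hmod : (k:ℕ)%2^(ℓ-1) = (k':ℕ)%2^(ℓ-1)) :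
    (∏ m ∈ Finset.Ico 2 (L+1), Y m (eeF L m k k') (eeF L (m-1) k k'))
      = (∏ m ∈ Finset.Ico (ℓ+1) (L+1), Y m k k) * Y ℓ k k'
        * (∏ m ∈ Finset.Ico 2 ℓ, Y m k' k') := by
  have hup : ∀ m, ℓ ≤ m → eeF L m k k' = k := fun m hm =>
    Fin.ext (ee_eq_left (div_pow_mono hdiv.symm hm))
  have hlow : ∀ m, m ≤ ℓ-1 → eeF L m k k' = k' := fun m hm =>
    Fin.ext (ee_eq_right (mod_pow_mono hmod hm))
  rw [← Finset.prod_Ico_consecutive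
      (fun m => Y m (eeF L m k k') (eeF L (m-1) k k'))
      (show 2 ≤ ℓ by omega) (show ℓ ≤ L+1 by omega),
    Finset.prod_eq_prod_Ico_succ_bot (show ℓ < L+1 by omega)]
  rw [hup ℓ le_rfl, hlow (ℓ-1) le_rfl]
  have hp1 : (∏ m ∈ Finset.Ico 2 ℓ, Y m (eeF L m k k') (eeF L (m-1) k k'))
      = ∏ m ∈ Finset.Ico 2 ℓ, Y m k' k' :=
    Finset.prod_congr rfl (fun m hm => by
      simp only [Finset.mem_Ico] at hm
      rw [hlow m (by omega), hlow (m-1) (by omega)])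
  have hp2 : (∏ m ∈ Finset.Ico (ℓ+1) (L+1), Y m (eeF L m k k') (eeF L (m-1) k k'))
      = ∏ m ∈ Finset.Ico (ℓ+1) (L+1), Y m k k :=
    Finset.prod_congr rfl (fun m hm => by
      simp only [Finset.mem_Ico] at hm
      rw [hup m (by omega), hup (m-1) (by omega)])
  rw [hp1, hp2]
  ring

end BFaux

open BFaux

/-- Let `L ≥ 1`, `N = 2^L`.  For every tuple `(X'_L, …, X'_1)` of
complex `N × N` matrices with `supp X'_ℓ ⊆ supp F^(ℓ)` for `2 ≤ ℓ ≤ L`,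
`supp X'_1 ⊆ supp (F^(1) R_N)`, and `X'_L ⋯ X'_1 = F_N`, there are invertible diagonal
matrices `D_1, …, D_{L−1}` such that, with `D_0 = D_L = I`,
`X'_ℓ = D_ℓ⁻¹ F^(ℓ) D_{ℓ−1}` for `2 ≤ ℓ ≤ L` and `X'_1 = D_1⁻¹ F^(1) R_N`. -/
theorem dft_butterfly_factorization_S_unique (L : ℕ) (hL : 1 ≤ L)
    (X' : ℕ → Matrix (Fin (2 ^ L)) (Fin (2 ^ L)) ℂ)
    (hsupp : ∀ ℓ, 2 ≤ ℓ → ℓ ≤ L → msupp (X' ℓ) ⊆ msupp (Fbut L ℓ))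
    (hsupp1 : msupp (X' 1) ⊆ msupp (Fbut L 1 * Rmat L))
    (hprod : pprod X' L 1 = dftM (2 ^ L)) :
    ∃ d : ℕ → Fin (2 ^ L) → ℂ, (∀ ℓ i, d ℓ i ≠ 0) ∧
      (∀ i, d 0 i = 1) ∧ (∀ i, d L i = 1) ∧
      (∀ ℓ, 2 ≤ ℓ → ℓ ≤ L →
        X' ℓ = Matrix.diagonal (fun i => (d ℓ i)⁻¹) * Fbut L ℓ * Matrix.diagonal (d (ℓ - 1))) ∧
      X' 1 = Matrix.diagonal (fun i => (d 1 i)⁻¹) * (Fbut L 1 * Rmat L) := by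
  classical
  have hsX : ∀ m, 2 ≤ m → m ≤ L → ∀ a b : Fin (2^L), X' m a b ≠ 0 →
      (a:ℕ)/2^m = (b:ℕ)/2^m ∧ (a:ℕ)%2^(m-1) = (b:ℕ)%2^(m-1) := by
    intro m h2 hmL a b hab
    by_contra hcon
    have hmem : ((a, b) : Fin (2^L) × Fin (2^L)) ∈ msupp (X' m) := hab
    have hmem2 := hsupp m h2 hmL hmem
    rw [msupp, Set.mem_setOf_eq] at hmem2
    exact hmem2 (Fbut_eq_zero (by omega) a b hcon)
  have hsX1 : ∀ a b : Fin (2^L), X' 1 a b ≠ 0 → (a:ℕ)/2^1 = (nrev L (b:ℕ))/2^1 := by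
    intro a b hab
    have hmem : ((a, b) : Fin (2^L) × Fin (2^L)) ∈ msupp (X' 1) := hab
    have h := hsupp1 hmem
    rw [msupp, Set.mem_setOf_eq] at h
    by_contra hcon
    apply h
    rw [FbutRmat_apply]
    exact Fbut_eq_zero le_rfl _ _ (fun hc => hcon hc.1)
  have hpath : ∀ i j : Fin (2^L), dftM (2^L) i j =
      (∏ m ∈ Finset.Ico 2 (L+1),
        X' m (eeF L m i (revF L j)) (eeF L (m-1) i (revF L j)))
        * X' 1 (eeF L 1 i (revF L j)) j := by
    intro i j
    rw [← hprod]
    exact pprod_apply hL X' hsX hsX1 i j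
  have hXdiag : ∀ i : Fin (2^L), (∀ m ∈ Finset.Ico 2 (L+1), X' m i i ≠ 0) := by
    intro i
    have hrr : revF L (revF L i) = i := Fin.ext (nrev_nrev i.2)
    have hee : ∀ m, eeF L m i i = i := fun m => Fin.ext (ee_eq_left rfl)
    have h := hpath i (revF L i)
    rw [hrr] at h
    rw [show (∏ m ∈ Finset.Ico 2 (L+1), X' m (eeF L m i i) (eeF L (m-1) i i))
        = ∏ m ∈ Finset.Ico 2 (L+1), X' m i i from
      Finset.prod_congr rfl (fun m _ => by rw [hee m, hee (m-1)]), hee 1] at h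
    have hne := dft_ne_zero (N := 2^L) i (revF L i)
    rw [h] at hne
    exact fun m hm => Finset.prod_ne_zero_iff.1 (mul_ne_zero_iff.1 hne).1 m hm
  have huX : ∀ ℓ (i : Fin (2^L)), 1 ≤ ℓ →
      (∏ m ∈ Finset.Ico (ℓ+1) (L+1), X' m i i) ≠ 0 := by
    intro ℓ i h1
    refine Finset.prod_ne_zero_iff.2 (fun m hm => ?_)
    simp only [Finset.mem_Ico] at hm
    exact hXdiag i m (Finset.mem_Ico.2 ⟨by omega, by omega⟩)
  have huG : ∀ ℓ (i : Fin (2^L)),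
      (∏ m ∈ Finset.Ico (ℓ+1) (L+1), Fbut L m i i) ≠ 0 := by
    intro ℓ i
    refine Finset.prod_ne_zero_iff.2 (fun m hm => ?_)
    simp only [Finset.mem_Ico] at hm
    exact Fbut_diag_ne_zero (by omega) i
  refine ⟨fun ℓ i => if ℓ = 0 then 1 else
      (∏ m ∈ Finset.Ico (ℓ+1) (L+1), X' m i i) / (∏ m ∈ Finset.Ico (ℓ+1) (L+1), Fbut L m i i),
    ?_, ?_, ?_, ?_, ?_⟩
  · intro ℓ i
    by_cases h0 : ℓ = 0
    · subst h0; simp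
    · simp only [if_neg h0]
      exact div_ne_zero (huX ℓ i (by omega)) (huG ℓ i)
  · intro i
    simp
  · intro i
    simp [show L ≠ 0 by omega, Finset.Ico_self]
  · intro ℓ h2 hlL
    apply Matrix.ext
    intro k k'
    rw [Matrix.mul_diagonal, Matrix.diagonal_mul]
    simp only [if_neg (show ℓ ≠ 0 by omega), if_neg (show ℓ - 1 ≠ 0 by omega)]
    by_cases hcon : (k:ℕ)/2^ℓ = (k':ℕ)/2^ℓ ∧ (k:ℕ)%2^(ℓ-1) = (k':ℕ)%2^(ℓ-1)
    · obtain ⟨hdiv, hmod⟩ := hcon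
      have hrr : revF L (revF L k') = k' := Fin.ext (nrev_nrev k'.2)
      have h1k : eeF L 1 k k' = k' := Fin.ext (ee_eq_right (mod_pow_mono hmod (by omega)))
      have h1k' : eeF L 1 k' k' = k' := Fin.ext (ee_eq_left rfl)
      have EA := hpath k (revF L k')
      rw [hrr, path_split X' h2 hlL k k' hdiv hmod, h1k] at EA
      have EB := hpath k' (revF L k')
      rw [hrr, path_split X' h2 hlL k' k' rfl rfl, h1k'] at EB
      have GA := dft_path hL k (revF L k')
      rw [hrr, path_split (fun m => Fbut L m) h2 hlL k k' hdiv hmod, h1k] at GA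
      have GB := dft_path hL k' (revF L k')
      rw [hrr, path_split (fun m => Fbut L m) h2 hlL k' k' rfl rfl, h1k'] at GB
      have hXl1 : (∏ m ∈ Finset.Ico (ℓ-1+1) (L+1), X' m k' k')
          = X' ℓ k' k' * ∏ m ∈ Finset.Ico (ℓ+1) (L+1), X' m k' k' := by
        rw [show ℓ-1+1 = ℓ by omega,
          Finset.prod_eq_prod_Ico_succ_bot (show ℓ < L+1 by omega)]
      have hGl1 : (∏ m ∈ Finset.Ico (ℓ-1+1) (L+1), Fbut L m k' k')
          = Fbut L ℓ k' k' * ∏ m ∈ Finset.Ico (ℓ+1) (L+1), Fbut L m k' k' := by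
        rw [show ℓ-1+1 = ℓ by omega,
          Finset.prod_eq_prod_Ico_succ_bot (show ℓ < L+1 by omega)]
      have hA := dft_ne_zero (N := 2^L) k (revF L k')
      have hB := dft_ne_zero (N := 2^L) k' (revF L k')
      have hEB := EB ▸ hB
      have hGB := GB ▸ hB
      -- names
      set A := dftM (2^L) k (revF L k') with hAdef
      set B := dftM (2^L) k' (revF L k') with hBdef
      set a1 := ∏ m ∈ Finset.Ico (ℓ+1) (L+1), X' m k k with ha1def
      set a1' := ∏ m ∈ Finset.Ico (ℓ+1) (L+1), X' m k' k' with ha1'def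
      set p := ∏ m ∈ Finset.Ico 2 ℓ, X' m k' k' with hpdef
      set x3 := X' 1 k' (revF L k') with hx3def
      set g1 := ∏ m ∈ Finset.Ico (ℓ+1) (L+1), Fbut L m k k with hg1def
      set g1' := ∏ m ∈ Finset.Ico (ℓ+1) (L+1), Fbut L m k' k' with hg1'def
      set q := ∏ m ∈ Finset.Ico 2 ℓ, Fbut L m k' k' with hqdef
      set g3 := (Fbut L 1 * Rmat L) k' (revF L k') with hg3def
      have hp : p ≠ 0 := fun h => hEB (by rw [h]; ring)
      have hx3 : x3 ≠ 0 := fun h => hEB (by rw [h]; ring)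
      have hq : q ≠ 0 := fun h => hGB (by rw [h]; ring)
      have hg3 : g3 ≠ 0 := fun h => hGB (by rw [h]; ring)
      have ha1 : a1 ≠ 0 := huX ℓ k (by omega)
      have ha1' : a1' ≠ 0 := huX ℓ k' (by omega)
      have hg1 : g1 ≠ 0 := huG ℓ k
      have hg1' : g1' ≠ 0 := huG ℓ k'
      have hXd : X' ℓ k' k' ≠ 0 := hXdiag k' ℓ (Finset.mem_Ico.2 ⟨by omega, by omega⟩)
      have hGd : Fbut L ℓ k' k' ≠ 0 := Fbut_diag_ne_zero (by omega) k'
      have e1 : X' ℓ k k' * (a1 * (p * x3)) = A := by rw [EA]; ring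
      have e2 : (X' ℓ k' k' * a1') * (p * x3) = B := by rw [EB]; ring
      have e3 : Fbut L ℓ k k' * (g1 * (q * g3)) = A := by rw [GA]; ring
      have e4 : (Fbut L ℓ k' k' * g1') * (q * g3) = B := by rw [GB]; ring
      have e5 : (X' ℓ k k' * a1 * (Fbut L ℓ k' k' * g1')) * ((p*x3)*(q*g3))
          = (Fbut L ℓ k k' * g1 * (X' ℓ k' k' * a1')) * ((p*x3)*(q*g3)) := by
        linear_combination (Fbut L ℓ k' k' * g1' * (q*g3)) * e1 + A * e4
          - (X' ℓ k' k' * a1' * (p*x3)) * e3 - A * e2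
      have e6 := mul_right_cancel₀ (mul_ne_zero (mul_ne_zero hp hx3) (mul_ne_zero hq hg3)) e5
      rw [hXl1, hGl1]
      field_simp
      linear_combination e6
    · have hX0 : X' ℓ k k' = 0 := by
        by_contra h
        exact hcon (hsX ℓ h2 hlL k k' h)
      have hG0 : Fbut L ℓ k k' = 0 := Fbut_eq_zero (by omega) k k' hcon
      rw [hX0, hG0, mul_zero, zero_mul]
  · apply Matrix.ext
    intro k j
    rw [Matrix.diagonal_mul]
    simp only [if_neg (one_ne_zero)]
    by_cases hcon : (k:ℕ)/2^1 = (nrev L (j:ℕ))/2^1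
    · have heem : ∀ m, 1 ≤ m → eeF L m k (revF L j) = k := fun m hm =>
        Fin.ext (ee_eq_left (div_pow_mono hcon.symm hm))
      have EA := hpath k j
      rw [show (∏ m ∈ Finset.Ico 2 (L+1),
            X' m (eeF L m k (revF L j)) (eeF L (m-1) k (revF L j)))
          = ∏ m ∈ Finset.Ico 2 (L+1), X' m k k from
        Finset.prod_congr rfl (fun m hm => by
          simp only [Finset.mem_Ico] at hm
          rw [heem m (by omega), heem (m-1) (by omega)]), heem 1 le_rfl] at EA
      have GA := dft_path hL k j
      rw [show (∏ m ∈ Finset.Ico 2 (L+1),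
            Fbut L m (eeF L m k (revF L j)) (eeF L (m-1) k (revF L j)))
          = ∏ m ∈ Finset.Ico 2 (L+1), Fbut L m k k from
        Finset.prod_congr rfl (fun m hm => by
          simp only [Finset.mem_Ico] at hm
          rw [heem m (by omega), heem (m-1) (by omega)]), heem 1 le_rfl] at GA
      have hA := dft_ne_zero (N := 2^L) k j
      have ha1 : (∏ m ∈ Finset.Ico (1+1) (L+1), X' m k k) ≠ 0 := huX 1 k le_rfl
      have hg1 : (∏ m ∈ Finset.Ico (1+1) (L+1), Fbut L m k k) ≠ 0 := huG 1 k
      have e1 : (∏ m ∈ Finset.Ico (1+1) (L+1), X' m k k) * X' 1 k j = dftM (2^L) k j := by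
        rw [EA]
      have e2 : (∏ m ∈ Finset.Ico (1+1) (L+1), Fbut L m k k) * (Fbut L 1 * Rmat L) k j
          = dftM (2^L) k j := by rw [GA]
      rw [inv_div, div_mul_eq_mul_div, eq_div_iff ha1]
      linear_combination e1 - e2
    · have hX0 : X' 1 k j = 0 := by
        by_contra h
        exact hcon (hsX1 k j h)
      have hG0 : (Fbut L 1 * Rmat L) k j = 0 := by
        rw [FbutRmat_apply]
        exact Fbut_eq_zero le_rfl _ _ (fun hc => hcon hc.1)
      rw [hX0, hG0, mul_zero]
end
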